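/- arXiv:1307.5547 — 5 statements merged into one kernel-verified Lean document; each statement's English description precedes it below -/
import Mathlib

section
/- Every graph G whose vertex set is partitioned into a set P of probes and an independent set N of non-probes and which admits a probe interval model also admits a normal probe interval model. -/
open Set

/-- A set of columns is consecutive in the column order. -/
def ConsecSet {k : ℕ} (A : Set (Fin k)) : Prop :=
  ∀ i j l : Fin k, i ≤ j → j ≤ l → i ∈ A → l ∈ A → j ∈ A

/-- Every row of the 0-1 matrix `M` has a nonempty consecutive block of 1's. -/
def RowsOK {V : Type} {k : ℕ} (M : V → Fin k → Prop) : Prop :=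
  ∀ v : V, {j | M v j}.Nonempty ∧ ConsecSet {j | M v j}

/-- The matrix `M` represents exactly the adjacencies of `G`, where `P` is the probe set:
two distinct vertices are adjacent iff some column has a 1 in both rows and at least
one of the two vertices is a probe. -/
def Represents {V : Type} {k : ℕ} (G : SimpleGraph V) (P : Set V)
    (M : V → Fin k → Prop) : Prop :=
  ∀ u v : V, u ≠ v → (G.Adj u v ↔ (u ∈ P ∨ v ∈ P) ∧ ∃ j, M u j ∧ M v j)

/-- `M` is a probe interval model of `G` with probe set `P`. -/
def IsPIModel {V : Type} {k : ℕ} (G : SimpleGraph V) (P : Set V)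
    (M : V → Fin k → Prop) : Prop :=
  RowsOK M ∧ Represents G P M

/-- The pairs of vertices that the matrix represents as adjacent. -/
def RepAdj {V : Type} {k : ℕ} (P : Set V) (M : V → Fin k → Prop) (u v : V) : Prop :=
  u ≠ v ∧ (u ∈ P ∨ v ∈ P) ∧ ∃ j, M u j ∧ M v j

/-- `c` is the left endpoint of row `v`: the first column where the row has a 1. -/
def IsLeftEnd {V : Type} {k : ℕ} (M : V → Fin k → Prop) (v : V) (c : Fin k) : Prop :=
  M v c ∧ ∀ j, M v j → c ≤ j

/-- `c` is the right endpoint of row `v`: the last column where the row has a 1. -/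
def IsRightEnd {V : Type} {k : ℕ} (M : V → Fin k → Prop) (v : V) (c : Fin k) : Prop :=
  M v c ∧ ∀ j, M v j → j ≤ c

/-- A proper left endpoint: the left endpoint of a row with a 1 in more than one column. -/
def IsProperLeftEnd {V : Type} {k : ℕ} (M : V → Fin k → Prop) (v : V) (c : Fin k) : Prop :=
  IsLeftEnd M v c ∧ ∃ j, M v j ∧ j ≠ c

/-- A proper right endpoint: the right endpoint of a row with a 1 in more than one column. -/
def IsProperRightEnd {V : Type} {k : ℕ} (M : V → Fin k → Prop) (v : V) (c : Fin k) : Prop :=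
  IsRightEnd M v c ∧ ∃ j, M v j ∧ j ≠ c

/-- `M'` is obtained from `M` by a contraction of row `v`: the first or last 1 of
row `v` is changed to a 0, resulting in a shorter (still nonempty) interval. -/
def Contraction {V : Type} {k : ℕ} (M M' : V → Fin k → Prop) (v : V) : Prop :=
  ∃ c : Fin k, (IsProperLeftEnd M v c ∨ IsProperRightEnd M v c) ∧
    ∀ u j, M' u j ↔ M u j ∧ ¬(u = v ∧ j = c)

/-- Row `v` is taut: every contraction of it changes the set of vertex pairs that
the matrix represents as adjacent. -/
def TautRow {V : Type} {k : ℕ} (P : Set V) (M : V → Fin k → Prop) (v : V) : Prop :=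
  ∀ M' : V → Fin k → Prop, Contraction M M' v → RepAdj P M' ≠ RepAdj P M

/-- Every row of the model is taut. -/
def Taut {V : Type} {k : ℕ} (P : Set V) (M : V → Fin k → Prop) : Prop :=
  ∀ v : V, TautRow P M v

/-- The matrix obtained from `M` by merging the consecutive columns `i` and `i + 1`
(replacing them by their entrywise OR). -/
def mergeCols {V : Type} {k : ℕ} (M : V → Fin k → Prop) (i : ℕ) :
    V → Fin (k - 1) → Prop := fun v j =>
  if h1 : j.val < i then M v ⟨j.val, by have := j.isLt; omega⟩
  else if h2 : j.val = i then
    M v ⟨i, by have := j.isLt; omega⟩ ∨ M v ⟨i + 1, by have := j.isLt; omega⟩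
  else M v ⟨j.val + 1, by have := j.isLt; omega⟩

/-- The consecutive columns `i` and `i + 1` of the model `M` of `G` can be merged:
replacing them by their entrywise OR again yields a probe interval model representing
the same adjacencies. -/
def CanMerge {V : Type} {k : ℕ} (G : SimpleGraph V) (P : Set V)
    (M : V → Fin k → Prop) (i : ℕ) : Prop :=
  i + 1 < k ∧ IsPIModel G P (mergeCols M i)

/-- No two consecutive columns of the model can be merged. -/
def MinimalModel {V : Type} {k : ℕ} (G : SimpleGraph V) (P : Set V)
    (M : V → Fin k → Prop) : Prop :=
  ∀ i : ℕ, ¬ CanMerge G P M i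

/-- A normal probe interval model: a probe interval model that is taut and minimal. -/
def IsNormalModel {V : Type} {k : ℕ} (G : SimpleGraph V) (P : Set V)
    (M : V → Fin k → Prop) : Prop :=
  IsPIModel G P M ∧ Taut P M ∧ MinimalModel G P M

/-- The vertex set of a column: the vertices whose rows have a 1 in that column. -/
def colVerts {V : Type} {k : ℕ} (M : V → Fin k → Prop) (j : Fin k) : Set V :=
  {v | M v j}

/-- The probe set of a column. -/
def probeSetCol {V : Type} {k : ℕ} (P : Set V) (M : V → Fin k → Prop)
    (j : Fin k) : Set V :=
  {v | v ∈ P ∧ M v j}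

/-- The probe set of the column with (natural number) index `n`, empty if out of range. -/
def probeSetAt {W : Type} {K : ℕ} (P : Set W) (M : W → Fin K → Prop) (n : ℕ) : Set W :=
  {v | v ∈ P ∧ ∃ hn : n < K, M v ⟨n, hn⟩}

/-- `G` is a probe interval graph with respect to the probe set `P`. -/
def IsPIGraph {V : Type} (G : SimpleGraph V) (P : Set V) : Prop :=
  ∃ (k : ℕ) (M : V → Fin k → Prop), IsPIModel G P M

/-- `x` is a simplicial non-probe: a non-probe whose neighborhood induces a
complete subgraph. -/
def SimpNonProbe {V : Type} (G : SimpleGraph V) (P : Set V) (x : V) : Prop :=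
  x ∉ P ∧ G.IsClique (G.neighborSet x)

/-- The set `N_S` of simplicial non-probes. -/
def setNS {V : Type} (G : SimpleGraph V) (P : Set V) : Set V :=
  {x | SimpNonProbe G P x}

/-- `K` is (the vertex set of) a maximal complete subgraph of `H`. -/
def IsMaxClique {W : Type} (H : SimpleGraph W) (K : Set W) : Prop :=
  H.IsClique K ∧ ∀ K' : Set W, H.IsClique K' → K ⊆ K' → K' = K

/-- `K` is (the vertex set of) a maximal complete subgraph of `G[P]`. -/
def IsMaxPClique {V : Type} (G : SimpleGraph V) (P : Set V) (K : Set V) : Prop :=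
  (K ⊆ P ∧ K.Pairwise G.Adj) ∧
    ∀ K' : Set V, K' ⊆ P → K'.Pairwise G.Adj → K ⊆ K' → K' = K

/-- A clique column: its vertex set contains a clique of `G[P]`. -/
def IsCliqueCol {V : Type} {k : ℕ} (G : SimpleGraph V) (P : Set V)
    (M : V → Fin k → Prop) (j : Fin k) : Prop :=
  ∃ K : Set V, IsMaxPClique G P K ∧ K ⊆ colVerts M j

/-- A left semi-clique column: it contains a proper right endpoint of a probe and a
proper left endpoint of a non-probe, but no left endpoint of a probe and no right
endpoint of a non-probe. -/
def IsLeftSemiCol {V : Type} {k : ℕ} (P : Set V) (M : V → Fin k → Prop)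
    (j : Fin k) : Prop :=
  (∃ p ∈ P, IsProperRightEnd M p j) ∧ (∃ x, x ∉ P ∧ IsProperLeftEnd M x j) ∧
    (∀ p ∈ P, ¬ IsLeftEnd M p j) ∧ (∀ x, x ∉ P → ¬ IsRightEnd M x j)

/-- A right semi-clique column (symmetric to a left semi-clique column). -/
def IsRightSemiCol {V : Type} {k : ℕ} (P : Set V) (M : V → Fin k → Prop)
    (j : Fin k) : Prop :=
  (∃ p ∈ P, IsProperLeftEnd M p j) ∧ (∃ x, x ∉ P ∧ IsProperRightEnd M x j) ∧
    (∀ p ∈ P, ¬ IsRightEnd M p j) ∧ (∀ x, x ∉ P → ¬ IsLeftEnd M x j)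

/-- A semi-clique column: a left or right semi-clique column. -/
def IsSemiCol {V : Type} {k : ℕ} (P : Set V) (M : V → Fin k → Prop)
    (j : Fin k) : Prop :=
  IsLeftSemiCol P M j ∨ IsRightSemiCol P M j

/-- A simplicial column: not a clique column, its vertex set contains a simplicial
non-probe, and it contains no endpoint of a non-simplicial non-probe. -/
def IsSimpCol {V : Type} {k : ℕ} (G : SimpleGraph V) (P : Set V)
    (M : V → Fin k → Prop) (j : Fin k) : Prop :=
  ¬ IsCliqueCol G P M j ∧ (∃ x, SimpNonProbe G P x ∧ M x j) ∧
    ∀ x, x ∉ P → ¬ SimpNonProbe G P x → ¬ IsLeftEnd M x j ∧ ¬ IsRightEnd M x j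

/-- The probe set of the induced subgraph `G - N_S` on `V \ N_S`. -/
def probesPS {V : Type} (G : SimpleGraph V) (P : Set V) : Set ↥((setNS G P)ᶜ) :=
  {v | (v : V) ∈ P}

/-- The graph `G**` on `V \ N_S`: its edges are those of `G - N_S` together with the
pairs `x y` of non-probes such that `N(x) ∩ N(y)` equals a clique of `G[P]` or
contains two nonadjacent vertices. -/
def Gss {V : Type} (G : SimpleGraph V) (P : Set V) : SimpleGraph ↥((setNS G P)ᶜ) :=
  SimpleGraph.fromRel (fun u v =>
    G.Adj (u : V) (v : V) ∨
      ((u : V) ∉ P ∧ (v : V) ∉ P ∧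
        ((∃ K : Set V, IsMaxPClique G P K ∧
            G.neighborSet (u : V) ∩ G.neighborSet (v : V) = K) ∨
          (∃ a b : V, a ∈ G.neighborSet (u : V) ∩ G.neighborSet (v : V) ∧
            b ∈ G.neighborSet (u : V) ∩ G.neighborSet (v : V) ∧
            a ≠ b ∧ ¬ G.Adj a b))))

/-- `M` is a consecutive-ones ordered clique matrix of `H`: it has one column per
maximal clique of `H`, with a 1 in row `v` and column `K` exactly when `v ∈ K`, and
the 1's in every row are consecutive. -/
def IsC1CliqueMatrix {W : Type} (H : SimpleGraph W) {k : ℕ}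
    (M : W → Fin k → Prop) : Prop :=
  (∃ f : Fin k → Set W, Function.Injective f ∧
      (∀ j, IsMaxClique H (f j)) ∧ (∀ K, IsMaxClique H K → ∃ j, f j = K) ∧
      (∀ v j, M v j ↔ v ∈ f j)) ∧
    ∀ v : W, ConsecSet {j | M v j}

/-- A 0-1 matrix (with rows indexed by `R`) has the consecutive-ones property. -/
def HasC1P {R : Type} {n : ℕ} (M : R → Fin n → Prop) : Prop :=
  ∃ σ : Equiv.Perm (Fin n), ∀ r, ConsecSet {j | M r (σ j)}

/-- Two sets properly overlap. -/
def ProperOverlap {α : Type} (A B : Set α) : Prop :=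
  (A ∩ B).Nonempty ∧ (A \ B).Nonempty ∧ (B \ A).Nonempty

/-!
Take a model with the fewest columns: it is minimal, because merging two columns would
give a model with one column fewer. Its rows are intervals `[l v, r v]`; tighten them in two
passes without changing the columns. First move each left end to the least right end `A v`
in the closed neighbourhood of `v`, then each right end to the greatest new left end `B v`
in the closed neighbourhood. Every edge still overlaps, and now a proper left (right) end
of `v` is the only column `v` shares with the neighbour that attains `A v` (`B v`), so no
contraction preserves the represented adjacencies.
-/

section ClosedNeighbourhood

variable {V α : Type} [LinearOrder α] (G : SimpleGraph V)

lemma SimpleGraph.exists_argmin_closedNbhd [WellFoundedLT α] (f : V → α) (v : V) :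
    ∃ w, (w = v ∨ G.Adj v w) ∧ ∀ u, (u = v ∨ G.Adj v u) → f w ≤ f u := by
  obtain ⟨w, hw, hmin⟩ :=
    exists_minimalFor_of_wellFoundedLT (fun u => u = v ∨ G.Adj v u) f ⟨v, Or.inl rfl⟩
  exact ⟨w, hw, fun u hu => (le_total (f w) (f u)).elim id (hmin hu)⟩

lemma SimpleGraph.exists_argmax_closedNbhd [WellFoundedGT α] (f : V → α) (v : V) :
    ∃ w, (w = v ∨ G.Adj v w) ∧ ∀ u, (u = v ∨ G.Adj v u) → f u ≤ f w := by
  obtain ⟨w, hw, hmax⟩ :=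
    exists_maximalFor_of_wellFoundedGT (fun u => u = v ∨ G.Adj v u) f ⟨v, Or.inl rfl⟩
  exact ⟨w, hw, fun u hu => (le_total (f u) (f w)).elim id (hmax hu)⟩

variable [WellFoundedLT α] [WellFoundedGT α] {G}

lemma SimpleGraph.exists_tight_intervals {l r : V → α} (hlr : ∀ v, l v ≤ r v)
    (hadj : ∀ u v, G.Adj u v → l u ≤ r v) :
    ∃ A B : V → α, (∀ v, l v ≤ A v ∧ A v ≤ B v ∧ B v ≤ r v) ∧
      (∀ u v, G.Adj u v → A u ≤ B v) ∧
      (∀ v, A v = B v ∨ ∃ u, G.Adj v u ∧ B u ≤ A v) ∧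
      (∀ v, A v = B v ∨ ∃ u, G.Adj v u ∧ B v ≤ A u) := by
  choose wl hwl hlmin using G.exists_argmin_closedNbhd r
  set A := fun v => r (wl v)
  choose wr hwr hrmax using G.exists_argmax_closedNbhd A
  have hlA : ∀ v, l v ≤ A v := fun v => by
    rcases hwl v with h | h
    · simp only [A, h, hlr]
    · exact hadj _ _ h
  have hAB : ∀ v, A v ≤ A (wr v) := fun v => hrmax v v (Or.inl rfl)
  have hBr : ∀ v, A (wr v) ≤ r v := fun v => by
    rcases hwr v with h | h
    · rw [h]; exact hlmin v v (Or.inl rfl)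
    · exact hlmin (wr v) v (Or.inr h.symm)
  refine ⟨A, fun v => A (wr v), fun v => ⟨hlA v, hAB v, hBr v⟩,
    fun u v h => hrmax v u (Or.inr h.symm), fun v => ?_, fun v => ?_⟩
  · rcases hwl v with h | h
    · exact Or.inl <| le_antisymm (hAB v) (by simpa only [A, h] using hBr v)
    · exact Or.inr ⟨wl v, h, hBr (wl v)⟩
  · rcases hwr v with h | h
    · exact Or.inl (by simp only [h])
    · exact Or.inr ⟨wr v, h, le_rfl⟩

end ClosedNeighbourhood

section IntervalModel

variable {V : Type} {k : ℕ} {G : SimpleGraph V} {P : Set V}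

def intervalMatrix (l r : V → Fin k) : V → Fin k → Prop := fun v j => l v ≤ j ∧ j ≤ r v

lemma rowsOK_intervalMatrix {l r : V → Fin k} (hlr : ∀ v, l v ≤ r v) :
    RowsOK (intervalMatrix l r) :=
  fun v => ⟨⟨l v, le_rfl, hlr v⟩, fun _ _ _ hij hjl hi hl => ⟨hi.1.trans hij, hjl.trans hl.2⟩⟩

lemma RowsOK.exists_eq_intervalMatrix {M : V → Fin k → Prop} (hM : RowsOK M) :
    ∃ l r : V → Fin k, (∀ v, l v ≤ r v) ∧ M = intervalMatrix l r := by
  have hrow : ∀ v, ∃ a b, a ≤ b ∧ ∀ j, M v j ↔ a ≤ j ∧ j ≤ b := fun v => by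
    obtain ⟨hne, hcons⟩ := hM v
    obtain ⟨a, ha, hmin⟩ := exists_minimalFor_of_wellFoundedLT (M v) id hne
    obtain ⟨b, hb, hmax⟩ := exists_maximalFor_of_wellFoundedGT (M v) id hne
    have hle : ∀ j, M v j → a ≤ j ∧ j ≤ b := fun j hj =>
      ⟨(le_total a j).elim id (hmin hj), (le_total j b).elim id (hmax hj)⟩
    exact ⟨a, b, (hle b hb).1, fun j => ⟨hle j, fun h => hcons a j b h.1 h.2 ha hb⟩⟩
  choose l r hlr hM using hrow
  exact ⟨l, r, hlr, funext fun v => funext fun j => propext (hM v j)⟩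

lemma IsProperLeftEnd.eq_of_intervalMatrix {l r : V → Fin k} {v : V} {c : Fin k}
    (h : IsProperLeftEnd (intervalMatrix l r) v c) : c = l v ∧ l v < r v := by
  obtain ⟨⟨hc, hmin⟩, j, hj, hjc⟩ := h
  have hcl : c = l v := le_antisymm (hmin (l v) ⟨le_rfl, hc.1.trans hc.2⟩) hc.1
  subst hcl
  exact ⟨rfl, lt_of_lt_of_le (lt_of_le_of_ne hj.1 hjc.symm) hj.2⟩

lemma IsProperRightEnd.eq_of_intervalMatrix {l r : V → Fin k} {v : V} {c : Fin k}
    (h : IsProperRightEnd (intervalMatrix l r) v c) : c = r v ∧ l v < r v := by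
  obtain ⟨⟨hc, hmax⟩, j, hj, hjc⟩ := h
  have hcr : c = r v := le_antisymm hc.2 (hmax (r v) ⟨hc.1.trans hc.2, le_rfl⟩)
  subst hcr
  exact ⟨rfl, lt_of_le_of_lt hj.1 (lt_of_le_of_ne hj.2 hjc)⟩

lemma Represents.repAdj {M : V → Fin k → Prop} (hM : Represents G P M) {u v : V}
    (h : G.Adj u v) : RepAdj P M u v :=
  ⟨h.ne, (hM u v h.ne).1 h⟩

lemma Represents.le_of_adj {l r : V → Fin k} (hM : Represents G P (intervalMatrix l r))
    {u v : V} (h : G.Adj u v) : l u ≤ r v := by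
  obtain ⟨-, j, hu, hv⟩ := (hM u v h.ne).1 h
  exact hu.1.trans hv.2

lemma Represents.mono {M M' : V → Fin k → Prop} (hM : Represents G P M)
    (hle : ∀ v j, M' v j → M v j) (hedge : ∀ u v, G.Adj u v → ∃ j, M' u j ∧ M' v j) :
    Represents G P M' := fun u v huv =>
  ⟨fun h => ⟨((hM u v huv).1 h).1, hedge u v h⟩,
    fun ⟨hP, j, hu, hv⟩ => (hM u v huv).2 ⟨hP, j, hle u j hu, hle v j hv⟩⟩

lemma repAdj_ne_of_forall_common_eq {M M' : V → Fin k → Prop} {u v : V} {c : Fin k}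
    (hM' : ∀ w j, M' w j ↔ M w j ∧ ¬(w = v ∧ j = c)) (huv : RepAdj P M u v)
    (hcommon : ∀ j, M u j → M v j → j = c) : RepAdj P M' ≠ RepAdj P M := by
  intro heq
  obtain ⟨-, -, j, hu, hv⟩ := heq ▸ huv
  rw [hM'] at hu hv
  exact hv.2 ⟨rfl, hcommon j hu.1 hv.1⟩

lemma tautRow_intervalMatrix {A B : V → Fin k} {v : V}
    (hM : Represents G P (intervalMatrix A B))
    (hleft : A v = B v ∨ ∃ u, G.Adj v u ∧ B u ≤ A v)
    (hright : A v = B v ∨ ∃ u, G.Adj v u ∧ B v ≤ A u) :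
    TautRow P (intervalMatrix A B) v := by
  rintro M' ⟨c, hc | hc, hM'⟩
  · obtain ⟨rfl, hlt⟩ := hc.eq_of_intervalMatrix
    obtain h | ⟨u, hvu, hu⟩ := hleft
    · exact absurd h hlt.ne
    exact repAdj_ne_of_forall_common_eq hM' (hM.repAdj hvu.symm)
      fun j hju hjv => le_antisymm (hju.2.trans hu) hjv.1
  · obtain ⟨rfl, hlt⟩ := hc.eq_of_intervalMatrix
    obtain h | ⟨u, hvu, hu⟩ := hright
    · exact absurd h hlt.ne
    exact repAdj_ne_of_forall_common_eq hM' (hM.repAdj hvu.symm)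
      fun j hju hjv => le_antisymm hjv.2 (hu.trans hju.1)

lemma exists_taut_model {M : V → Fin k → Prop} (hM : IsPIModel G P M) :
    ∃ M' : V → Fin k → Prop, IsPIModel G P M' ∧ Taut P M' := by
  obtain ⟨hrows, hrep⟩ := hM
  obtain ⟨l, r, hlr, rfl⟩ := hrows.exists_eq_intervalMatrix
  obtain ⟨A, B, hsub, hedge, hleft, hright⟩ :=
    SimpleGraph.exists_tight_intervals hlr fun u v h => hrep.le_of_adj h
  have hrep' : Represents G P (intervalMatrix A B) :=
    hrep.mono (fun v j hj => ⟨(hsub v).1.trans hj.1, hj.2.trans (hsub v).2.2⟩)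
      fun u v h => ⟨max (A u) (A v), ⟨le_max_left _ _, max_le (hsub u).2.1 (hedge v u h.symm)⟩,
        ⟨le_max_right _ _, max_le (hedge u v h) (hsub v).2.1⟩⟩
  exact ⟨_, ⟨rowsOK_intervalMatrix fun v => (hsub v).2.1, hrep'⟩,
    fun v => tautRow_intervalMatrix hrep' (hleft v) (hright v)⟩

lemma minimalModel_of_forall_lt {M : V → Fin k → Prop}
    (h : ∀ k' < k, ∀ M' : V → Fin k' → Prop, ¬ IsPIModel G P M') : MinimalModel G P M :=
  fun _ ⟨hi, hmerge⟩ => h (k - 1) (by omega) _ hmerge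

end IntervalModel

theorem stmt0_general {V : Type} (G : SimpleGraph V) (P : Set V)
    (hPIG : IsPIGraph G P) :
    ∃ (k : ℕ) (M : V → Fin k → Prop), IsNormalModel G P M := by
  classical
  obtain ⟨M, hM⟩ := Nat.find_spec hPIG
  obtain ⟨M', hM', htaut⟩ := exists_taut_model hM
  exact ⟨_, M', hM', htaut,
    minimalModel_of_forall_lt fun _ hk' M'' h => Nat.find_min hPIG hk' ⟨M'', h⟩⟩

/-- Every graph `G` whose vertex set is partitioned into a set `P` of
probes and an independent set of non-probes and which admits a probe interval model
also admits a normal probe interval model. -/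
theorem stmt0 {V : Type} (G : SimpleGraph V) (P : Set V)
    (hIndep : ∀ u v : V, u ∉ P → v ∉ P → ¬ G.Adj u v)
    (hPIG : IsPIGraph G P) :
    ∃ (k : ℕ) (M : V → Fin k → Prop), IsNormalModel G P M :=
  stmt0_general G P hPIG
end

section
/- In every normal probe interval model of a connected probe interval graph with more than one vertex, every column has at least one probe in its vertex set. -/
/-!
Suppose column `j` of a normal model holds no probe. Erasing the 1 of any row in column `j`
then changes no represented adjacency, so tautness forbids proper endpoints at `j`; and a row
consisting of column `j` alone would isolate its vertex, since an edge needs a common column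
containing a probe. Hence every row through `j` continues into column `j + 1`. But two
consecutive columns whose vertex sets are nested can always be merged (nestedness is exactly
what keeps the adjacencies), contradicting minimality. Column `j` is nonempty because an empty
column can be merged with a neighbour.
-/

open Set

section Merge

variable {V : Type} {k i : ℕ}

def mergeIndex (hi : i + 1 < k) (s : Fin k) : Fin (k - 1) :=
  ⟨if s.val ≤ i then s.val else s.val - 1, by split_ifs <;> omega⟩

lemma mergeIndex_monotone (hi : i + 1 < k) : Monotone (mergeIndex hi) := by
  intro s t hst
  simp only [mergeIndex, Fin.le_iff_val_le_val] at hst ⊢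
  split_ifs <;> omega

lemma mergeIndex_eq_iff (hi : i + 1 < k) (s : Fin k) (t : Fin (k - 1)) :
    mergeIndex hi s = t ↔ (s.val = t.val ∧ t.val ≤ i) ∨ (s.val = t.val + 1 ∧ i ≤ t.val) := by
  simp only [mergeIndex, Fin.ext_iff]
  split_ifs <;> omega

lemma mergeIndex_surjective (hi : i + 1 < k) : Function.Surjective (mergeIndex hi) := by
  intro t
  by_cases ht : t.val ≤ i
  · exact ⟨⟨t.val, by omega⟩, (mergeIndex_eq_iff hi _ t).2 (Or.inl ⟨rfl, ht⟩)⟩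
  · exact ⟨⟨t.val + 1, by omega⟩, (mergeIndex_eq_iff hi _ t).2 (Or.inr ⟨rfl, by omega⟩)⟩

lemma mergeIndex_eq_mergeIndex (hi : i + 1 < k) {s s' : Fin k}
    (h : mergeIndex hi s = mergeIndex hi s') :
    s = s' ∨ (s.val = i ∧ s'.val = i + 1) ∨ (s.val = i + 1 ∧ s'.val = i) := by
  have h' := (mergeIndex_eq_iff hi s _).1 h
  have h'' := (mergeIndex_eq_iff hi s' (mergeIndex hi s')).1 rfl
  rw [Fin.ext_iff]
  omega

lemma mergeCols_iff (M : V → Fin k → Prop) (hi : i + 1 < k) (v : V) (t : Fin (k - 1)) :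
    mergeCols M i v t ↔ ∃ s, mergeIndex hi s = t ∧ M v s := by
  simp only [mergeIndex_eq_iff]
  unfold mergeCols
  split_ifs with h1 h2
  · refine ⟨fun h => ⟨_, Or.inl ⟨rfl, h1.le⟩, h⟩, ?_⟩
    rintro ⟨s, hs, h⟩
    rwa [show s = ⟨t.val, by omega⟩ from Fin.ext (by simp only; omega)] at h
  · refine ⟨fun h => h.elim (fun h => ⟨_, Or.inl ⟨h2.symm, h2.le⟩, h⟩)
      (fun h => ⟨_, Or.inr ⟨by simp only; omega, h2.ge⟩, h⟩), ?_⟩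
    rintro ⟨s, hs, h⟩
    obtain ⟨hs, -⟩ | ⟨hs, -⟩ := hs
    · rw [show s = ⟨i, by omega⟩ from Fin.ext (by simp only; omega)] at h
      exact Or.inl h
    · rw [show s = ⟨i + 1, by omega⟩ from Fin.ext (by simp only; omega)] at h
      exact Or.inr h
  · refine ⟨fun h => ⟨_, Or.inr ⟨rfl, by omega⟩, h⟩, ?_⟩
    rintro ⟨s, hs, h⟩
    rwa [show s = ⟨t.val + 1, by omega⟩ from Fin.ext (by simp only; omega)] at h

lemma ConsecSet.image_of_monotone {m : ℕ} {f : Fin k → Fin m} (hf : Monotone f)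
    (hsurj : Function.Surjective f) {A : Set (Fin k)} (hA : ConsecSet A) :
    ConsecSet (f '' A) := by
  rintro _ b _ hab hbc ⟨a, ha, rfl⟩ ⟨c, hc, rfl⟩
  obtain rfl | hab := hab.eq_or_lt
  · exact ⟨a, ha, rfl⟩
  obtain rfl | hbc := hbc.eq_or_lt
  · exact ⟨c, hc, rfl⟩
  obtain ⟨s, rfl⟩ := hsurj b
  exact ⟨s, hA a s c (hf.reflect_lt hab).le (hf.reflect_lt hbc).le ha hc, rfl⟩

lemma rowsOK_mergeCols {M : V → Fin k → Prop} (hM : RowsOK M) (hi : i + 1 < k) :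
    RowsOK (mergeCols M i) := by
  intro v
  have hrow : {t | mergeCols M i v t} = mergeIndex hi '' {s | M v s} := by
    ext t
    simp only [mergeCols_iff M hi, Set.mem_ofPred_eq, Set.mem_image, and_comm]
  rw [hrow]
  exact ⟨(hM v).1.image _,
    (hM v).2.image_of_monotone (mergeIndex_monotone hi) (mergeIndex_surjective hi)⟩

def NestedCols (M : V → Fin k → Prop) (hi : i + 1 < k) : Prop :=
  colVerts M ⟨i, by omega⟩ ⊆ colVerts M ⟨i + 1, hi⟩ ∨
    colVerts M ⟨i + 1, hi⟩ ⊆ colVerts M ⟨i, by omega⟩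

lemma exists_common_col_of_nested {M : V → Fin k → Prop} (hi : i + 1 < k)
    (hnest : NestedCols M hi) {u v : V} {s s' : Fin k} (hu : M u s) (hv : M v s') (hs : s.val = i)
    (hs' : s'.val = i + 1) : ∃ c, M u c ∧ M v c := by
  rw [show s = ⟨i, by omega⟩ from Fin.ext hs] at hu
  rw [show s' = ⟨i + 1, hi⟩ from Fin.ext hs'] at hv
  rcases hnest with hnest | hnest
  exacts [⟨_, hnest hu, hv⟩, ⟨_, hu, hnest hv⟩]

lemma represents_mergeCols {G : SimpleGraph V} {P : Set V} {M : V → Fin k → Prop}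
    (hM : Represents G P M) (hi : i + 1 < k)
    (hnest : NestedCols M hi) :
    Represents G P (mergeCols M i) := by
  intro u v huv
  rw [hM u v huv]
  refine and_congr_right fun _ => ⟨?_, ?_⟩
  · rintro ⟨s, hu, hv⟩
    exact ⟨mergeIndex hi s, (mergeCols_iff M hi u _).2 ⟨s, rfl, hu⟩,
      (mergeCols_iff M hi v _).2 ⟨s, rfl, hv⟩⟩
  · rintro ⟨t, hut, hvt⟩
    obtain ⟨s, rfl, hu⟩ := (mergeCols_iff M hi u t).1 hut
    obtain ⟨s', hss', hv⟩ := (mergeCols_iff M hi v _).1 hvt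
    obtain rfl | ⟨h, h'⟩ | ⟨h, h'⟩ := mergeIndex_eq_mergeIndex hi hss'.symm
    · exact ⟨s, hu, hv⟩
    · exact exists_common_col_of_nested hi hnest hu hv h h'
    · obtain ⟨c, hv, hu⟩ := exists_common_col_of_nested hi hnest hv hu h' h
      exact ⟨c, hu, hv⟩

theorem IsPIModel.canMerge {G : SimpleGraph V} {P : Set V} {M : V → Fin k → Prop}
    (hM : IsPIModel G P M) (hi : i + 1 < k)
    (hnest : NestedCols M hi) :
    CanMerge G P M i :=
  ⟨hi, rowsOK_mergeCols hM.1 hi, represents_mergeCols hM.2 hi hnest⟩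

end Merge

section NormalModel

variable {V : Type} {k : ℕ} {G : SimpleGraph V} {P : Set V} {M : V → Fin k → Prop}

lemma MinimalModel.colVerts_nonempty [Nonempty V] (hmin : MinimalModel G P M)
    (hM : IsPIModel G P M) (j : Fin k) : (colVerts M j).Nonempty := by
  by_contra hempty
  rw [Set.not_nonempty_iff_eq_empty] at hempty
  by_cases hj : j.val + 1 < k
  · exact hmin j.val (hM.canMerge hj (Or.inl (hempty ▸ Set.empty_subset _)))
  by_cases hj0 : j.val = 0
  · obtain ⟨v⟩ := ‹Nonempty V›
    obtain ⟨t, ht⟩ := (hM.1 v).1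
    rw [show t = j from Fin.ext (by omega)] at ht
    exact hempty.subset ht
  · have hi : j.val - 1 + 1 < k := by omega
    refine hmin (j.val - 1) (hM.canMerge hi (Or.inr ?_))
    rw [show (⟨j.val - 1 + 1, hi⟩ : Fin k) = j from Fin.ext (by simp only; omega), hempty]
    exact Set.empty_subset _

lemma repAdj_erase_eq_of_probeSetCol_eq_empty {j : Fin k} (hj : probeSetCol P M j = ∅)
    (x : V) : RepAdj P (fun u t => M u t ∧ ¬(u = x ∧ t = j)) = RepAdj P M := by
  have hnp : ∀ v, M v j → v ∉ P := fun v hv hp =>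
    Set.eq_empty_iff_forall_notMem.1 hj v ⟨hp, hv⟩
  funext u v
  refine propext ⟨fun ⟨hne, hP, t, hu, hv⟩ => ⟨hne, hP, t, hu.1, hv.1⟩, ?_⟩
  rintro ⟨hne, hP, t, hu, hv⟩
  refine ⟨hne, hP, t, ⟨hu, ?_⟩, ⟨hv, ?_⟩⟩ <;>
  · rintro ⟨rfl, rfl⟩
    rcases hP with hp | hp
    exacts [hnp _ hu hp, hnp _ hv hp]

lemma TautRow.not_isProperEnd_of_probeSetCol_eq_empty {x : V} {j : Fin k}
    (htaut : TautRow P M x) (hj : probeSetCol P M j = ∅) :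
    ¬ (IsProperLeftEnd M x j ∨ IsProperRightEnd M x j) := fun hend =>
  htaut _ ⟨j, hend, fun _ _ => Iff.rfl⟩ (repAdj_erase_eq_of_probeSetCol_eq_empty hj x)

lemma Represents.exists_ne_col_of_adj {x z : V} {j : Fin k} (hM : Represents G P M)
    (hj : probeSetCol P M j = ∅) (hx : M x j) (hxz : G.Adj x z) : ∃ t, M x t ∧ t ≠ j := by
  obtain ⟨hP, t, hxt, hzt⟩ := (hM x z hxz.ne).1 hxz
  refine ⟨t, hxt, ?_⟩
  rintro rfl
  rcases hP with hp | hp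
  exacts [Set.eq_empty_iff_forall_notMem.1 hj x ⟨hp, hx⟩,
    Set.eq_empty_iff_forall_notMem.1 hj z ⟨hp, hzt⟩]

lemma IsNormalModel.exists_gt_col_of_adj {x z : V} {j : Fin k} (hM : IsNormalModel G P M)
    (hj : probeSetCol P M j = ∅) (hx : M x j) (hxz : G.Adj x z) : ∃ t, j < t ∧ M x t := by
  by_contra! hle
  obtain ⟨t, hxt, htj⟩ := hM.1.2.exists_ne_col_of_adj hj hx hxz
  refine (hM.2.1 x).not_isProperEnd_of_probeSetCol_eq_empty hj (Or.inr ?_)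
  exact ⟨⟨hx, fun s hs => not_lt.1 fun hjs => hle s hjs hs⟩, t, hxt, htj⟩

end NormalModel

theorem stmt1_general {V : Type} [Fintype V] (G : SimpleGraph V) (P : Set V)
    (hConn : G.Connected) (hcard : 1 < Fintype.card V)
    {k : ℕ} (M : V → Fin k → Prop) (hM : IsNormalModel G P M) :
    ∀ j : Fin k, ∃ p, p ∈ P ∧ M p j := by
  have : Nontrivial V := Fintype.one_lt_card_iff_nontrivial.1 hcard
  intro j
  by_contra! hj
  have hj : probeSetCol P M j = ∅ :=
    Set.eq_empty_iff_forall_notMem.2 fun p hp => hj p hp.1 hp.2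
  have hright : ∀ v, M v j → ∃ t, j < t ∧ M v t := fun v hv =>
    have ⟨_, hvw⟩ := hConn.preconnected.exists_adj_of_nontrivial v
    hM.exists_gt_col_of_adj hj hv hvw
  obtain ⟨x, hx⟩ := hM.2.2.colVerts_nonempty hM.1 j
  obtain ⟨t, hjt, -⟩ := hright x hx
  have hi : j.val + 1 < k := by have := t.isLt; rw [Fin.lt_def] at hjt; omega
  refine hM.2.2 j.val (hM.1.canMerge hi (Or.inl fun v hv => ?_))
  obtain ⟨t, hjt, hvt⟩ := hright v hv
  exact (hM.1.1 v).2 j _ t (Fin.le_iff_val_le_val.2 (Nat.le_succ _))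
    (Fin.le_iff_val_le_val.2 (Fin.lt_def.1 hjt)) hv hvt

/-- In every normal probe interval model of a connected probe interval
graph with more than one vertex, every column has at least one probe in its vertex set. -/
theorem stmt1 {V : Type} [Fintype V] (G : SimpleGraph V) (P : Set V)
    (hIndep : ∀ u v : V, u ∉ P → v ∉ P → ¬ G.Adj u v)
    (hConn : G.Connected) (hcard : 1 < Fintype.card V)
    {k : ℕ} (M : V → Fin k → Prop) (hM : IsNormalModel G P M) :
    ∀ j : Fin k, ∃ p, p ∈ P ∧ M p j :=
  stmt1_general G P hConn hcard M hM
end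

section
/- In every normal probe interval model of a connected probe interval graph, a non-probe x has a 1 in exactly one column if and only if x is simplicial. -/
open Set

/-! Contracting a proper endpoint of a non-probe `x` in a taut model must destroy an
edge, so some probe meets `x` only in that endpoint column. If `x` spans two columns,
the probes `u`, `v` obtained at its two ends lie to the left resp. right of the interval
of `x`, hence share no column and are nonadjacent although both are neighbours of `x`.
Conversely, if `x` occupies a single column, all its neighbours are probes in that column,
so they are pairwise adjacent. -/

lemma consecSet_iff_ordConnected {k : ℕ} {A : Set (Fin k)} : ConsecSet A ↔ A.OrdConnected :=
  ⟨fun h => ⟨fun _ hi _ hl _ hj => h _ _ _ hj.1 hj.2 hi hl⟩,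
    fun h _ _ _ hij hjl hi hl => h.out hi hl ⟨hij, hjl⟩⟩

section OrdConnected

variable {α : Type*} [LinearOrder α] {U X : Set α} {c d j : α}

lemma Set.OrdConnected.le_of_inter_subset_singleton (hU : U.OrdConnected)
    (hX : X.OrdConnected) (hcU : c ∈ U) (hcX : c ∈ X) (hUX : U ∩ X ⊆ {c})
    (hd : d ∈ X) (hcd : c < d) (hj : j ∈ U) : j ≤ c := by
  by_contra! hcj
  have hcm : c < min j d := lt_min hcj hcd
  have hmU : min j d ∈ U := hU.out hcU hj ⟨hcm.le, min_le_left _ _⟩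
  have hmX : min j d ∈ X := hX.out hcX hd ⟨hcm.le, min_le_right _ _⟩
  exact hcm.ne' (hUX ⟨hmU, hmX⟩)

lemma Set.OrdConnected.le_of_inter_subset_singleton' (hU : U.OrdConnected)
    (hX : X.OrdConnected) (hcU : c ∈ U) (hcX : c ∈ X) (hUX : U ∩ X ⊆ {c})
    (hd : d ∈ X) (hdc : d < c) (hj : j ∈ U) : c ≤ j :=
  hU.dual.le_of_inter_subset_singleton (d := OrderDual.toDual d) hX.dual hcU hcX hUX hd hdc hj

end OrdConnected

section Model

variable {V : Type} {k : ℕ} {G : SimpleGraph V} {P : Set V} {M : V → Fin k → Prop} {x : V}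

lemma Represents.adj_iff_of_notMem (hrep : Represents G P M) {u : V} (hx : x ∉ P) :
    G.Adj x u ↔ u ∈ P ∧ ∃ j, M x j ∧ M u j := by
  by_cases hu : u ∈ P
  · rw [hrep x u (ne_of_mem_of_not_mem hu hx).symm]
    simp [hu]
  · simp only [hu, false_and, iff_false]
    exact fun hxu => ((hrep x u hxu.ne).mp hxu).1.elim hx hu

lemma existsUnique_or_exists_properEnds (hne : {j | M x j}.Nonempty) :
    (∃! j, M x j) ∨ ∃ c d, c < d ∧ IsProperLeftEnd M x c ∧ IsProperRightEnd M x d := by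
  obtain ⟨c, hc, hcmin⟩ := Set.exists_min_image {j | M x j} id (Set.toFinite _) hne
  obtain ⟨d, hd, hdmax⟩ := Set.exists_max_image {j | M x j} id (Set.toFinite _) hne
  rcases (hcmin d hd).eq_or_lt with rfl | hcd
  · exact .inl ⟨c, hc, fun j hj => le_antisymm (hdmax j hj) (hcmin j hj)⟩
  · exact .inr ⟨c, d, hcd, ⟨⟨hc, hcmin⟩, d, hd, hcd.ne'⟩, ⟨⟨hd, hdmax⟩, c, hc, hcd.ne⟩⟩

/-- The contraction of row `x` at `c` loses a represented adjacency; as it only removes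
the entry `(x, c)`, that adjacency joins `x` to a probe sharing no other column with it. -/
lemma TautRow.exists_probe_inter_eq_endpoint (htaut : TautRow P M x) (hx : x ∉ P) {c : Fin k}
    (hend : IsProperLeftEnd M x c ∨ IsProperRightEnd M x c) :
    ∃ u ∈ P, M u c ∧ {j | M u j} ∩ {j | M x j} ⊆ {c} := by
  set M' : V → Fin k → Prop := fun u j => M u j ∧ ¬(u = x ∧ j = c)
  have hlost : ∃ a b, RepAdj P M a b ∧ ¬ RepAdj P M' a b := by
    by_contra! hsub
    refine htaut M' ⟨c, hend, fun _ _ => Iff.rfl⟩ (funext₂ fun a b => propext ⟨?_, hsub a b⟩)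
    rintro ⟨hab, hP, j, hj, hj'⟩
    exact ⟨hab, hP, j, hj.1, hj'.1⟩
  have hlost_at_x : ∃ u, RepAdj P M x u ∧ ¬ RepAdj P M' x u := by
    obtain ⟨a, b, ⟨hab, hP, j, ha, hb⟩, hnot⟩ := hlost
    by_cases hax : a = x
    · exact ⟨b, hax ▸ ⟨hab, hP, j, ha, hb⟩, hax ▸ hnot⟩
    by_cases hbx : b = x
    · refine ⟨a, hbx ▸ ⟨hab.symm, hP.symm, j, hb, ha⟩, fun h' => hnot ?_⟩
      obtain ⟨hne, hP', i, hi, hi'⟩ := h'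
      exact hbx ▸ ⟨hne.symm, hP'.symm, i, hi', hi⟩
    · exact (hnot ⟨hab, hP, j, ⟨ha, fun h => hax h.1⟩, ⟨hb, fun h => hbx h.1⟩⟩).elim
  obtain ⟨u, ⟨hxu, hP, j, hxj, huj⟩, hnot⟩ := hlost_at_x
  have hu : u ∈ P := hP.resolve_left hx
  have honly : {i | M u i} ∩ {i | M x i} ⊆ {c} := fun i ⟨hui, hxi⟩ => by
    by_contra hic
    exact hnot ⟨hxu, hP, i, ⟨hxi, fun h => hic h.2⟩, ⟨hui, fun h => hxu h.1.symm⟩⟩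
  exact ⟨u, hu, honly ⟨huj, hxj⟩ ▸ huj, honly⟩

lemma isClique_neighborSet_of_existsUnique (hrep : Represents G P M) (hx : x ∉ P)
    (hone : ∃! j, M x j) : G.IsClique (G.neighborSet x) := by
  obtain ⟨j₀, -, huniq⟩ := hone
  have hnbr : ∀ u, G.Adj x u → u ∈ P ∧ M u j₀ := fun u hxu => by
    obtain ⟨hu, j, hxj, huj⟩ := (hrep.adj_iff_of_notMem hx).mp hxu
    exact ⟨hu, huniq j hxj ▸ huj⟩
  intro u hxu v hxv huv
  exact (hrep u v huv).mpr ⟨.inl (hnbr u hxu).1, j₀, (hnbr u hxu).2, (hnbr v hxv).2⟩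

lemma existsUnique_of_isClique_neighborSet (hM : IsPIModel G P M) (htaut : TautRow P M x)
    (hx : x ∉ P) (hclique : G.IsClique (G.neighborSet x)) : ∃! j, M x j := by
  obtain ⟨hrows, hrep⟩ := hM
  have hord : ∀ v, {j | M v j}.OrdConnected := fun v => consecSet_iff_ordConnected.mp (hrows v).2
  refine (existsUnique_or_exists_properEnds (hrows x).1).resolve_right ?_
  rintro ⟨c, d, hcd, hc, hd⟩
  obtain ⟨u, hu, huc, hu_only⟩ := htaut.exists_probe_inter_eq_endpoint hx (.inl hc)
  obtain ⟨v, hv, hvd, hv_only⟩ := htaut.exists_probe_inter_eq_endpoint hx (.inr hd)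
  have hxu : G.Adj x u := (hrep.adj_iff_of_notMem hx).mpr ⟨hu, c, hc.1.1, huc⟩
  have hxv : G.Adj x v := (hrep.adj_iff_of_notMem hx).mpr ⟨hv, d, hd.1.1, hvd⟩
  have huv : u ≠ v := by
    rintro rfl
    exact hcd.ne' (hu_only ⟨hvd, hd.1.1⟩)
  obtain ⟨-, j, huj, hvj⟩ := (hrep u v huv).mp (hclique hxu hxv huv)
  have hjc : j ≤ c := (hord u).le_of_inter_subset_singleton (hord x) huc hc.1.1 hu_only
    hd.1.1 hcd huj
  have hdj : d ≤ j := (hord v).le_of_inter_subset_singleton' (hord x) hvd hd.1.1 hv_only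
    hc.1.1 hcd hvj
  exact (hdj.trans hjc).not_gt hcd

end Model

theorem stmt2_general {V : Type} (G : SimpleGraph V) (P : Set V)
    {k : ℕ} (M : V → Fin k → Prop) (hM : IsNormalModel G P M)
    (x : V) (hx : x ∉ P) :
    (∃! j : Fin k, M x j) ↔ G.IsClique (G.neighborSet x) :=
  ⟨isClique_neighborSet_of_existsUnique hM.1.2 hx,
    existsUnique_of_isClique_neighborSet hM.1 (hM.2.1 x) hx⟩

/-- In every normal probe interval model of a connected probe interval
graph, a non-probe `x` has a 1 in exactly one column iff `x` is simplicial. -/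
theorem stmt2 {V : Type} (G : SimpleGraph V) (P : Set V)
    (hIndep : ∀ u v : V, u ∉ P → v ∉ P → ¬ G.Adj u v)
    (hConn : G.Connected)
    {k : ℕ} (M : V → Fin k → Prop) (hM : IsNormalModel G P M)
    (x : V) (hx : x ∉ P) :
    (∃! j : Fin k, M x j) ↔ G.IsClique (G.neighborSet x) :=
  stmt2_general G P M hM x hx
end

section
/- In every normal probe interval model of a connected probe interval graph, no two consecutive columns have equal probe sets. -/
open Set

/-! If columns `p` and `p + 1` have the same probe set, merging them is harmless. On columns,
merging is the monotone surjection `p.predAbove`, so every row stays a nonempty interval. Two rows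
that meet after merging but not before have 1's only in columns `p` and `p + 1`, and one of them is
a probe; a probe with a 1 in one of these columns has a 1 in both, so the rows already met.
Hence such a pair of columns could be merged, which a minimal model forbids. -/

lemma Fin.val_predAbove {n : ℕ} (p : Fin n) (t : Fin (n + 1)) :
    (p.predAbove t).val = if p.val < t.val then t.val - 1 else t.val := by
  unfold Fin.predAbove
  split_ifs with h₁ h₂ <;> simp only [Fin.lt_def, Fin.val_castSucc] at h₁ <;>
    simp [Fin.val_pred, Fin.coe_castPred] <;> omega

lemma Fin.eq_or_mem_of_predAbove_eq {n : ℕ} {p : Fin n} {t t' : Fin (n + 1)}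
    (h : p.predAbove t = p.predAbove t') :
    t = t' ∨ (t = p.castSucc ∨ t = p.succ) ∧ (t' = p.castSucc ∨ t' = p.succ) := by
  simp only [Fin.ext_iff, Fin.val_predAbove, Fin.val_castSucc, Fin.val_succ] at h ⊢
  split_ifs at h <;> omega

theorem Set.OrdConnected.image_of_monotone_of_surjective {α β : Type*} [LinearOrder α]
    [PartialOrder β] {f : α → β} (hf : Monotone f) (hs : Function.Surjective f) {s : Set α}
    (h : s.OrdConnected) : (f '' s).OrdConnected := by
  refine ⟨?_⟩
  rintro _ ⟨x, hx, rfl⟩ _ ⟨z, hz, rfl⟩ b ⟨hxb, hbz⟩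
  obtain ⟨y, rfl⟩ := hs b
  rcases lt_or_ge y x with hyx | hxy
  · exact ⟨x, hx, le_antisymm hxb (hf hyx.le)⟩
  rcases le_or_gt y z with hyz | hzy
  · exact ⟨y, h.out hx hz ⟨hxy, hyz⟩, rfl⟩
  · exact ⟨z, hz, le_antisymm (hf hzy.le) hbz⟩

section Merge

variable {V : Type} {n : ℕ} {M : V → Fin (n + 1) → Prop} {p : Fin n}

lemma mergeCols_iff_s7 (v : V) (c : Fin n) :
    mergeCols M p v c ↔ ∃ t, M v t ∧ p.predAbove t = c := by
  have fiber : ∀ t, p.predAbove t = c ↔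
      (c.val < p.val ∧ t.val = c.val) ∨ (c.val = p.val ∧ (t.val = p.val ∨ t.val = p.val + 1)) ∨
        (p.val < c.val ∧ t.val = c.val + 1) := fun t => by
    rw [Fin.ext_iff, Fin.val_predAbove]; split_ifs <;> omega
  have hc := c.isLt
  simp only [fiber]
  unfold mergeCols
  split_ifs with h₁ h₂
  · constructor
    · exact fun h => ⟨_, h, Or.inl ⟨h₁, rfl⟩⟩
    · rintro ⟨t, hMt, ht⟩
      obtain rfl : t = ⟨c, by omega⟩ := Fin.ext (by simp only; omega)
      exact hMt
  · constructor
    · rintro (h | h)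
      · exact ⟨_, h, Or.inr (Or.inl ⟨h₂, Or.inl rfl⟩)⟩
      · exact ⟨_, h, Or.inr (Or.inl ⟨h₂, Or.inr rfl⟩)⟩
    · rintro ⟨t, hMt, ht⟩
      rcases (show t.val = p.val ∨ t.val = p.val + 1 by omega) with h | h
      · obtain rfl : t = p.castSucc := Fin.ext h
        exact Or.inl hMt
      · obtain rfl : t = p.succ := Fin.ext h
        exact Or.inr hMt
  · constructor
    · exact fun h => ⟨_, h, Or.inr (Or.inr ⟨by omega, rfl⟩)⟩
    · rintro ⟨t, hMt, ht⟩
      obtain rfl : t = ⟨c + 1, by omega⟩ := Fin.ext (by simp only; omega)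
      exact hMt

lemma setOf_mergeCols (v : V) :
    {c : Fin n | mergeCols M p v c} = p.predAbove '' {t | M v t} :=
  Set.ext fun c => mergeCols_iff_s7 v c

lemma rowsOK_mergeCols_s7 (h : RowsOK M) : RowsOK (mergeCols M p) := fun v => by
  obtain ⟨hne, hcons⟩ := h v
  rw [setOf_mergeCols, consecSet_iff_ordConnected]
  exact ⟨hne.image _, (consecSet_iff_ordConnected.1 hcons).image_of_monotone_of_surjective
    (Fin.predAbove_right_monotone p) (Fin.predAbove_surjective p)⟩

lemma exists_mergeCols_and_iff (u v : V) :
    (∃ c, mergeCols M p u c ∧ mergeCols M p v c) ↔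
      ∃ t t', M u t ∧ M v t' ∧ p.predAbove t = p.predAbove t' := by
  simp only [mergeCols_iff_s7]
  constructor
  · rintro ⟨c, ⟨t, hu, rfl⟩, ⟨t', hv, ht'⟩⟩
    exact ⟨t, t', hu, hv, ht'.symm⟩
  · rintro ⟨t, t', hu, hv, h⟩
    exact ⟨_, ⟨t, hu, rfl⟩, ⟨t', hv, h.symm⟩⟩

lemma represents_mergeCols_s7 {G : SimpleGraph V} {P : Set V} (hrep : Represents G P M)
    (hprobe : probeSetCol P M p.castSucc = probeSetCol P M p.succ) :
    Represents G P (mergeCols M p) := by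
  have spread : ∀ w ∈ P, ∀ {s s'}, (s = p.castSucc ∨ s = p.succ) →
      (s' = p.castSucc ∨ s' = p.succ) → M w s → M w s' := by
    intro w hw s s' hs hs'
    have hw' : M w p.castSucc ↔ M w p.succ := by
      simpa [probeSetCol, hw] using congrArg (w ∈ ·) hprobe
    rcases hs with rfl | rfl <;> rcases hs' with rfl | rfl <;> simp [hw']
  intro u v huv
  rw [hrep u v huv, exists_mergeCols_and_iff]
  refine and_congr_right fun hP => ⟨fun ⟨t, hu, hv⟩ => ⟨t, t, hu, hv, rfl⟩, ?_⟩
  rintro ⟨t, t', hu, hv, h⟩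
  rcases Fin.eq_or_mem_of_predAbove_eq h with rfl | ⟨ht, ht'⟩
  · exact ⟨t, hu, hv⟩
  rcases hP with hPu | hPv
  · exact ⟨t', spread u hPu ht ht' hu, hv⟩
  · exact ⟨t, hu, spread v hPv ht' ht hv⟩

lemma isPIModel_mergeCols {G : SimpleGraph V} {P : Set V} (hM : IsPIModel G P M)
    (hprobe : probeSetCol P M p.castSucc = probeSetCol P M p.succ) :
    IsPIModel G P (mergeCols M p) :=
  ⟨rowsOK_mergeCols_s7 hM.1, represents_mergeCols_s7 hM.2 hprobe⟩

end Merge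

theorem stmt7_general {V : Type} (G : SimpleGraph V) (P : Set V)
    {k : ℕ} (M : V → Fin k → Prop) (hM : IsNormalModel G P M) :
    ∀ j j' : Fin k, j.val + 1 = j'.val →
      probeSetCol P M j ≠ probeSetCol P M j' := by
  intro j j' hjj' hprobe
  obtain ⟨n, rfl⟩ : ∃ n, k = n + 1 := ⟨k - 1, by omega⟩
  obtain ⟨p, rfl⟩ : ∃ p : Fin n, j = p.castSucc := ⟨⟨j, by omega⟩, rfl⟩
  obtain rfl : j' = p.succ := Fin.ext (by simp [← hjj'])
  exact hM.2.2 p ⟨by simp, isPIModel_mergeCols hM.1 hprobe⟩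

/-- In every normal probe interval model of a connected probe interval
graph, no two consecutive columns have equal probe sets. -/
theorem stmt7 {V : Type} (G : SimpleGraph V) (P : Set V)
    (hIndep : ∀ u v : V, u ∉ P → v ∉ P → ¬ G.Adj u v)
    (hConn : G.Connected)
    {k : ℕ} (M : V → Fin k → Prop) (hM : IsNormalModel G P M) :
    ∀ j j' : Fin k, j.val + 1 = j'.val →
      probeSetCol P M j ≠ probeSetCol P M j' :=
  stmt7_general G P M hM
end

section
/- In every normal probe interval model of a connected probe interval graph with more than one vertex, every column is the left endpoint of at least one row and the right endpoint of at least one row (where these endpoints may be degenerate). -/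
open Set

/-! If no row starts in column `i + 1`, that column is contained in column `i`; if no row
ends in column `i`, it is contained in column `i + 1`. Either way deleting the smaller
column is exactly the merge of columns `i` and `i + 1`, and a deleted column whose vertex set
lies inside a surviving one loses no adjacency. So a minimal model has no such column. -/

section Merging

variable {V : Type} {k : ℕ} {G : SimpleGraph V} {P : Set V} {M : V → Fin k → Prop}

lemma IsPIModel.comp_of_monotone {n : ℕ} (hM : IsPIModel G P M) {e : Fin n → Fin k}
    (he : Monotone e) (hcover : ∀ c, ∃ l, colVerts M c ⊆ colVerts M (e l)) :
    IsPIModel G P (fun v l => M v (e l)) := by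
  obtain ⟨hrows, hrep⟩ := hM
  refine ⟨fun v => ⟨?_, ?_⟩, fun u v huv => ?_⟩
  · obtain ⟨c, hc⟩ := (hrows v).1
    obtain ⟨l, hl⟩ := hcover c
    exact ⟨l, hl hc⟩
  · intro a b c hab hbc ha hc
    exact (hrows v).2 _ _ _ (he hab) (he hbc) ha hc
  · rw [hrep u v huv]
    refine and_congr_right fun _ => ⟨fun ⟨c, hu, hv⟩ => ?_, fun ⟨l, hu, hv⟩ => ⟨e l, hu, hv⟩⟩
    obtain ⟨l, hl⟩ := hcover c
    exact ⟨l, hl hu, hl hv⟩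

def skipCol (k m : ℕ) (l : Fin (k - 1)) : Fin k :=
  ⟨if l.val < m then l.val else l.val + 1, by have := l.isLt; split_ifs <;> omega⟩

lemma skipCol_monotone (k m : ℕ) : Monotone (skipCol k m) := by
  intro a b hab
  rw [Fin.le_def] at hab ⊢
  simp only [skipCol]
  split_ifs <;> omega

lemma exists_skipCol_eq {m : ℕ} (hm : m < k) (c : Fin k) (hc : c.val ≠ m) :
    ∃ l, skipCol k m l = c := by
  have := c.isLt
  by_cases hcm : c.val < m
  · exact ⟨⟨c.val, by omega⟩, Fin.ext (by simp [skipCol, hcm])⟩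
  · refine ⟨⟨c.val - 1, by omega⟩, Fin.ext ?_⟩
    simp only [skipCol]
    split_ifs <;> omega

lemma canMerge_of_mergeCols_iff_skipCol {i m : ℕ} (hM : IsPIModel G P M) (hi : i + 1 < k)
    (hm : m < k) (hmerge : ∀ v l, mergeCols M i v l ↔ M v (skipCol k m l))
    (hcover : ∃ l, colVerts M ⟨m, hm⟩ ⊆ colVerts M (skipCol k m l)) :
    CanMerge G P M i := by
  have hcomp : mergeCols M i = fun v l => M v (skipCol k m l) :=
    funext₂ fun v l => propext (hmerge v l)
  refine ⟨hi, hcomp ▸ hM.comp_of_monotone (skipCol_monotone k m) fun c => ?_⟩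
  by_cases hc : c.val = m
  · obtain rfl : c = ⟨m, hm⟩ := Fin.ext hc
    exact hcover
  · obtain ⟨l, rfl⟩ := exists_skipCol_eq hm c hc
    exact ⟨l, subset_rfl⟩

lemma canMerge_of_succ_subset {i : ℕ} (hM : IsPIModel G P M) (hi : i + 1 < k)
    (hsub : colVerts M ⟨i + 1, hi⟩ ⊆ colVerts M ⟨i, by omega⟩) : CanMerge G P M i := by
  have hskip : skipCol k (i + 1) ⟨i, by omega⟩ = ⟨i, by omega⟩ := Fin.ext (by simp [skipCol])
  refine canMerge_of_mergeCols_iff_skipCol (m := i + 1) hM hi hi (fun v l => ?_)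
    ⟨⟨i, by omega⟩, hskip ▸ hsub⟩
  simp only [mergeCols, skipCol]
  split_ifs <;> try omega
  · rfl
  · simp only [show (l : ℕ) = i by omega]
    exact ⟨fun h => h.elim id fun h => hsub h, Or.inl⟩
  · rfl

lemma canMerge_of_subset_succ {i : ℕ} (hM : IsPIModel G P M) (hi : i + 1 < k)
    (hsub : colVerts M ⟨i, by omega⟩ ⊆ colVerts M ⟨i + 1, hi⟩) : CanMerge G P M i := by
  have hskip : skipCol k i ⟨i, by omega⟩ = ⟨i + 1, hi⟩ := Fin.ext (by simp [skipCol])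
  refine canMerge_of_mergeCols_iff_skipCol (m := i) hM hi (by omega) (fun v l => ?_)
    ⟨⟨i, by omega⟩, hskip ▸ hsub⟩
  simp only [mergeCols, skipCol]
  split_ifs <;> try omega
  · rfl
  · simp only [show (l : ℕ) = i by omega]
    exact ⟨fun h => h.elim (fun h => hsub h) id, Or.inr⟩
  · rfl

end Merging

section Endpoints

variable {V : Type} {k : ℕ} {M : V → Fin k → Prop}

lemma RowsOK.mem_of_not_isLeftEnd (hM : RowsOK M) {v : V} {i : ℕ} (hi : i + 1 < k)
    (hv : M v ⟨i + 1, hi⟩) (hnot : ¬ IsLeftEnd M v ⟨i + 1, hi⟩) : M v ⟨i, by omega⟩ := by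
  obtain ⟨c, hc, hlt⟩ : ∃ c, M v c ∧ c < ⟨i + 1, hi⟩ := by
    simpa [IsLeftEnd, hv] using hnot
  exact (hM v).2 c _ _ (Fin.le_def.2 (by simp [Fin.lt_def] at hlt; omega))
    (Fin.le_def.2 (by simp)) hc hv

lemma RowsOK.mem_of_not_isRightEnd (hM : RowsOK M) {v : V} {i : ℕ} (hi : i + 1 < k)
    (hv : M v ⟨i, by omega⟩) (hnot : ¬ IsRightEnd M v ⟨i, by omega⟩) : M v ⟨i + 1, hi⟩ := by
  obtain ⟨c, hc, hlt⟩ : ∃ c, M v c ∧ ⟨i, by omega⟩ < c := by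
    simpa [IsRightEnd, hv] using hnot
  exact (hM v).2 _ _ c (Fin.le_def.2 (by simp))
    (Fin.le_def.2 (by simp [Fin.lt_def] at hlt ⊢; omega)) hv hc

end Endpoints

namespace MinimalModel

variable {V : Type} [Nonempty V] {k : ℕ} {G : SimpleGraph V} {P : Set V}
  {M : V → Fin k → Prop}

lemma colVerts_nonempty_s9 (hmin : MinimalModel G P M) (hM : IsPIModel G P M) (j : Fin k) :
    (colVerts M j).Nonempty := by
  by_contra hempty
  rw [Set.not_nonempty_iff_eq_empty] at hempty
  obtain ⟨i, hi⟩ := j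
  by_cases hlast : i + 1 < k
  · exact hmin i (canMerge_of_subset_succ hM hlast (by simp [hempty]))
  rcases i with _ | i
  · obtain ⟨v⟩ := ‹Nonempty V›
    obtain ⟨c, hc⟩ := (hM.1 v).1
    have : c = ⟨0, hi⟩ := Fin.ext (by have := c.isLt; omega)
    exact hempty.subset (show v ∈ colVerts M ⟨0, hi⟩ from this ▸ hc)
  · exact hmin i (canMerge_of_succ_subset hM hi (by simp [hempty]))

lemma exists_isLeftEnd (hmin : MinimalModel G P M) (hM : IsPIModel G P M) (j : Fin k) :
    ∃ v, IsLeftEnd M v j := by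
  obtain ⟨w, hw⟩ := hmin.colVerts_nonempty_s9 hM j
  by_contra! hno
  obtain ⟨_ | i, hi⟩ := j
  · exact hno w ⟨hw, fun c _ => Fin.le_def.2 (Nat.zero_le _)⟩
  · exact hmin i (canMerge_of_succ_subset hM hi fun v hv =>
      hM.1.mem_of_not_isLeftEnd hi hv (hno v))

lemma exists_isRightEnd (hmin : MinimalModel G P M) (hM : IsPIModel G P M) (j : Fin k) :
    ∃ v, IsRightEnd M v j := by
  obtain ⟨w, hw⟩ := hmin.colVerts_nonempty_s9 hM j
  by_contra! hno
  obtain ⟨i, hi⟩ := j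
  by_cases hlast : i + 1 < k
  · exact hmin i (canMerge_of_subset_succ hM hlast fun v hv =>
      hM.1.mem_of_not_isRightEnd hlast hv (hno v))
  · exact hno w ⟨hw, fun c _ => Fin.le_def.2 (by have := c.isLt; simp only; omega)⟩

end MinimalModel

theorem stmt9_general {V : Type} [Fintype V] (G : SimpleGraph V) (P : Set V)
    (hcard : 1 < Fintype.card V)
    {k : ℕ} (M : V → Fin k → Prop) (hM : IsNormalModel G P M) :
    ∀ j : Fin k, (∃ v, IsLeftEnd M v j) ∧ (∃ v, IsRightEnd M v j) := by
  obtain ⟨hPI, -, hmin⟩ := hM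
  have : Nonempty V := Fintype.card_pos_iff.mp (by omega)
  exact fun j => ⟨hmin.exists_isLeftEnd hPI j, hmin.exists_isRightEnd hPI j⟩

/-- In every normal probe interval model of a connected probe interval
graph with more than one vertex, every column is the left endpoint of at least one row
and the right endpoint of at least one row (possibly degenerate). -/
theorem stmt9 {V : Type} [Fintype V] (G : SimpleGraph V) (P : Set V)
    (hIndep : ∀ u v : V, u ∉ P → v ∉ P → ¬ G.Adj u v)
    (hConn : G.Connected) (hcard : 1 < Fintype.card V)
    {k : ℕ} (M : V → Fin k → Prop) (hM : IsNormalModel G P M) :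
    ∀ j : Fin k, (∃ v, IsLeftEnd M v j) ∧ (∃ v, IsRightEnd M v j) :=
  stmt9_general G P hcard M hM
end
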